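/- Let 𝒪₂₄ be the orbit of the reduction of the Bugeye root quadruple (−1,2,2,3) in (ℤ/24ℤ)⁴ under the subgroup of GL(4,ℤ/24ℤ) generated by the reductions mod 24 of the Apollonian generators S₁,S₂,S₃,S₄. Then the set of all residues appearing as some coordinate of some vector of 𝒪₂₄ is exactly {2, 3, 6, 11, 14, 15, 18, 23} ⊆ ℤ/24ℤ. -/
import Mathlib


open Matrix

/-- The Apollonian generator `Sᵢ` over an arbitrary commutative ring. -/
def apolloGen (R : Type*) [CommRing R] (i : Fin 4) : Matrix (Fin 4) (Fin 4) R :=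
  Matrix.of fun j k => if j = i then (if k = i then -1 else 2) else (if j = k then 1 else 0)

/-- The group generated by the reductions of the Apollonian generators over `R`. -/
def apollonianGroupMod (R : Type*) [CommRing R] : Subgroup (Matrix (Fin 4) (Fin 4) R)ˣ :=
  Subgroup.closure {M : (Matrix (Fin 4) (Fin 4) R)ˣ | ∃ i, (M : Matrix (Fin 4) (Fin 4) R) = apolloGen R i}

/-- The orbit `𝒪₂₄` of the reduction mod 24 of the Bugeye root quadruple `(−1,2,2,3)`. -/
def bugeyeOrbitMod24 : Set (Fin 4 → ZMod 24) :=
  {w | ∃ M ∈ apollonianGroupMod (ZMod 24),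
    (M : Matrix (Fin 4) (Fin 4) (ZMod 24)).mulVec ![(-1 : ZMod 24), 2, 2, 3] = w}

/-- The explicit orbit of the root quadruple mod 24 (40 vectors, found by BFS). -/
def orbitList : List (Fin 4 → ZMod 24) :=
[![15, 2, 2, 3],
![15, 2, 2, 11],
![15, 2, 6, 11],
![15, 2, 14, 3],
![15, 2, 14, 11],
![15, 2, 18, 11],
![15, 6, 2, 11],
![15, 6, 14, 11],
![15, 14, 2, 3],
![15, 14, 2, 11],
![15, 14, 6, 11],
![15, 14, 14, 3],
![15, 14, 14, 11],
![15, 14, 18, 11],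
![15, 18, 2, 11],
![15, 18, 14, 11],
![23, 2, 2, 3],
![23, 2, 6, 3],
![23, 2, 6, 11],
![23, 2, 14, 3],
![23, 2, 18, 3],
![23, 2, 18, 11],
![23, 6, 2, 3],
![23, 6, 2, 11],
![23, 6, 6, 11],
![23, 6, 14, 3],
![23, 6, 14, 11],
![23, 6, 18, 11],
![23, 14, 2, 3],
![23, 14, 6, 3],
![23, 14, 6, 11],
![23, 14, 14, 3],
![23, 14, 18, 3],
![23, 14, 18, 11],
![23, 18, 2, 3],
![23, 18, 2, 11],
![23, 18, 6, 11],
![23, 18, 14, 3],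
![23, 18, 14, 11],
![23, 18, 18, 11]]

/-- One reflection step. -/
def step (i : Fin 4) (w : Fin 4 → ZMod 24) : Fin 4 → ZMod 24 :=
  fun j => if j = i then 2 * (w 0 + w 1 + w 2 + w 3) - 3 * w i else w j

/-- Boolean equality test for quadruples. -/
def eqv (u w : Fin 4 → ZMod 24) : Bool :=
  (u 0 == w 0) && (u 1 == w 1) && (u 2 == w 2) && (u 3 == w 3)

/-- Boolean membership test. -/
def memv (w : Fin 4 → ZMod 24) (l : List (Fin 4 → ZMod 24)) : Bool :=
  l.any (eqv w)

lemma eq_of_eqv {u w : Fin 4 → ZMod 24} (h : eqv u w = true) : u = w := by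
  simp only [eqv, Bool.and_eq_true, beq_iff_eq] at h
  obtain ⟨⟨⟨h0, h1⟩, h2⟩, h3⟩ := h
  funext j
  fin_cases j <;> assumption

lemma mem_of_memv {w : Fin 4 → ZMod 24} {l : List (Fin 4 → ZMod 24)}
    (h : memv w l = true) : w ∈ l := by
  simp only [memv, List.any_eq_true] at h
  obtain ⟨u, hu, he⟩ := h
  exact (eq_of_eqv he) ▸ hu

set_option maxRecDepth 40000 in
lemma check_closed : (orbitList.all fun w =>
    memv (step 0 w) orbitList && memv (step 1 w) orbitList &&
    memv (step 2 w) orbitList && memv (step 3 w) orbitList) = true := by decide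

lemma orbit_closed : ∀ w ∈ orbitList, ∀ i : Fin 4, step i w ∈ orbitList := by
  intro w hw i
  have h := List.all_eq_true.mp check_closed w hw
  simp only [Bool.and_eq_true] at h
  obtain ⟨⟨⟨h0, h1⟩, h2⟩, h3⟩ := h
  fin_cases i
  · exact mem_of_memv h0
  · exact mem_of_memv h1
  · exact mem_of_memv h2
  · exact mem_of_memv h3

set_option maxRecDepth 40000 in
lemma root_mem : (![(-1 : ZMod 24), 2, 2, 3]) ∈ orbitList :=
  mem_of_memv (by decide)

set_option maxRecDepth 40000 in
lemma check_residues : (orbitList.all fun w =>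
    (decide (w 0 = 2 ∨ w 0 = 3 ∨ w 0 = 6 ∨ w 0 = 11 ∨ w 0 = 14 ∨ w 0 = 15 ∨ w 0 = 18 ∨ w 0 = 23)) &&
    (decide (w 1 = 2 ∨ w 1 = 3 ∨ w 1 = 6 ∨ w 1 = 11 ∨ w 1 = 14 ∨ w 1 = 15 ∨ w 1 = 18 ∨ w 1 = 23)) &&
    (decide (w 2 = 2 ∨ w 2 = 3 ∨ w 2 = 6 ∨ w 2 = 11 ∨ w 2 = 14 ∨ w 2 = 15 ∨ w 2 = 18 ∨ w 2 = 23)) &&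
    (decide (w 3 = 2 ∨ w 3 = 3 ∨ w 3 = 6 ∨ w 3 = 11 ∨ w 3 = 14 ∨ w 3 = 15 ∨ w 3 = 18 ∨ w 3 = 23))) = true := by
  decide

lemma residues : ∀ w ∈ orbitList, ∀ i : Fin 4,
    w i = 2 ∨ w i = 3 ∨ w i = 6 ∨ w i = 11 ∨ w i = 14 ∨ w i = 15 ∨ w i = 18 ∨ w i = 23 := by
  intro w hw i
  have h := List.all_eq_true.mp check_residues w hw
  simp only [Bool.and_eq_true, decide_eq_true_eq] at h
  obtain ⟨⟨⟨h0, h1⟩, h2⟩, h3⟩ := h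
  fin_cases i <;> assumption

lemma mulVec_gen (i : Fin 4) (w : Fin 4 → ZMod 24) :
    (apolloGen (ZMod 24) i).mulVec w = step i w := by
  funext j
  fin_cases i <;> fin_cases j <;>
    simp [apolloGen, Matrix.mulVec, dotProduct, Fin.sum_univ_four, step] <;> ring

lemma apollo_sq (i : Fin 4) :
    apolloGen (ZMod 24) i * apolloGen (ZMod 24) i = 1 := by
  fin_cases i <;> decide

/-- Each Apollonian generator as a unit. -/
def genUnit (i : Fin 4) : (Matrix (Fin 4) (Fin 4) (ZMod 24))ˣ :=
  ⟨apolloGen (ZMod 24) i, apolloGen (ZMod 24) i, apollo_sq i, apollo_sq i⟩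

lemma genUnit_val (i : Fin 4) :
    ((genUnit i : (Matrix (Fin 4) (Fin 4) (ZMod 24))ˣ) : Matrix (Fin 4) (Fin 4) (ZMod 24))
      = apolloGen (ZMod 24) i := rfl

lemma genUnit_mem (i : Fin 4) : genUnit i ∈ apollonianGroupMod (ZMod 24) :=
  Subgroup.subset_closure ⟨i, rfl⟩

lemma inv_coe_gen (M : (Matrix (Fin 4) (Fin 4) (ZMod 24))ˣ) (i : Fin 4)
    (h : (M : Matrix (Fin 4) (Fin 4) (ZMod 24)) = apolloGen (ZMod 24) i) :
    ((M⁻¹ : (Matrix (Fin 4) (Fin 4) (ZMod 24))ˣ) : Matrix (Fin 4) (Fin 4) (ZMod 24))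
      = apolloGen (ZMod 24) i := by
  calc (↑(M⁻¹) : Matrix (Fin 4) (Fin 4) (ZMod 24))
      = ↑(M⁻¹) * (apolloGen (ZMod 24) i * apolloGen (ZMod 24) i) := by
        rw [apollo_sq, mul_one]
    _ = (↑(M⁻¹) * ↑M) * apolloGen (ZMod 24) i := by rw [← h, mul_assoc]
    _ = apolloGen (ZMod 24) i := by rw [Units.inv_mul, one_mul]

lemma orbit_preserved : ∀ M ∈ apollonianGroupMod (ZMod 24), ∀ w ∈ orbitList,
    (M : Matrix (Fin 4) (Fin 4) (ZMod 24)).mulVec w ∈ orbitList := by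
  intro M hM
  have key : (∀ w ∈ orbitList,
      (M : Matrix (Fin 4) (Fin 4) (ZMod 24)).mulVec w ∈ orbitList) ∧
      (∀ w ∈ orbitList,
      ((M⁻¹ : _ˣ) : Matrix (Fin 4) (Fin 4) (ZMod 24)).mulVec w ∈ orbitList) := by
    refine Subgroup.closure_induction ?_ ?_ ?_ ?_ hM
    · rintro N ⟨i, hN⟩
      constructor
      · intro w hw
        rw [hN, mulVec_gen]
        exact orbit_closed w hw i
      · intro w hw
        rw [inv_coe_gen N i hN, mulVec_gen]
        exact orbit_closed w hw i
    · constructor <;> intro w hw <;> simp [Matrix.one_mulVec, hw]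
    · rintro A B - - ⟨hA1, hA2⟩ ⟨hB1, hB2⟩
      constructor
      · intro w hw
        rw [Units.val_mul, ← Matrix.mulVec_mulVec]
        exact hA1 _ (hB1 w hw)
      · intro w hw
        rw [_root_.mul_inv_rev, Units.val_mul, ← Matrix.mulVec_mulVec]
        exact hB2 _ (hA2 w hw)
    · rintro A - ⟨hA1, hA2⟩
      exact ⟨hA2, by simpa using hA1⟩
  exact key.1

theorem stmt19 :
    {r : ZMod 24 | ∃ w ∈ bugeyeOrbitMod24, ∃ i : Fin 4, w i = r} =
      ({2, 3, 6, 11, 14, 15, 18, 23} : Set (ZMod 24)) := by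
  ext r
  simp only [Set.mem_setOf_eq, Set.mem_insert_iff, Set.mem_singleton_iff]
  constructor
  · rintro ⟨w, ⟨M, hM, rfl⟩, i, rfl⟩
    exact residues _ (orbit_preserved M hM _ root_mem) i
  · have h1 : ((genUnit 1 : (Matrix (Fin 4) (Fin 4) (ZMod 24))ˣ) :
        Matrix (Fin 4) (Fin 4) (ZMod 24)).mulVec ![(-1 : ZMod 24), 2, 2, 3]
        = step 1 ![(-1 : ZMod 24), 2, 2, 3] := by
      rw [genUnit_val, mulVec_gen]
    have h30 : ((↑(genUnit 3 * genUnit 0) : Matrix (Fin 4) (Fin 4) (ZMod 24))).mulVec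
        ![(-1 : ZMod 24), 2, 2, 3] = step 3 (step 0 ![(-1 : ZMod 24), 2, 2, 3]) := by
      rw [Units.val_mul, ← Matrix.mulVec_mulVec, genUnit_val, genUnit_val,
        mulVec_gen, mulVec_gen]
    have h10 : ((↑(genUnit 1 * genUnit 0) : Matrix (Fin 4) (Fin 4) (ZMod 24))).mulVec
        ![(-1 : ZMod 24), 2, 2, 3] = step 1 (step 0 ![(-1 : ZMod 24), 2, 2, 3]) := by
      rw [Units.val_mul, ← Matrix.mulVec_mulVec, genUnit_val, genUnit_val,
        mulVec_gen, mulVec_gen]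
    have h0 : ((genUnit 0 : (Matrix (Fin 4) (Fin 4) (ZMod 24))ˣ) :
        Matrix (Fin 4) (Fin 4) (ZMod 24)).mulVec ![(-1 : ZMod 24), 2, 2, 3]
        = step 0 ![(-1 : ZMod 24), 2, 2, 3] := by
      rw [genUnit_val, mulVec_gen]
    have h131 : ((↑(genUnit 1 * genUnit 3 * genUnit 1) :
        Matrix (Fin 4) (Fin 4) (ZMod 24))).mulVec ![(-1 : ZMod 24), 2, 2, 3]
        = step 1 (step 3 (step 1 ![(-1 : ZMod 24), 2, 2, 3])) := by
      simp only [Units.val_mul, ← Matrix.mulVec_mulVec, genUnit_val, mulVec_gen]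
    rintro (rfl | rfl | rfl | rfl | rfl | rfl | rfl | rfl)
    · exact ⟨_, ⟨1, one_mem _, rfl⟩, 1, by decide⟩
    · exact ⟨_, ⟨1, one_mem _, rfl⟩, 3, by decide⟩
    · exact ⟨_, ⟨genUnit 1, genUnit_mem 1, rfl⟩, 1, by rw [h1]; decide⟩
    · exact ⟨_, ⟨genUnit 3 * genUnit 0, mul_mem (genUnit_mem 3) (genUnit_mem 0), rfl⟩, 3,
        by rw [h30]; decide⟩
    · exact ⟨_, ⟨genUnit 1 * genUnit 0, mul_mem (genUnit_mem 1) (genUnit_mem 0), rfl⟩, 1,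
        by rw [h10]; decide⟩
    · exact ⟨_, ⟨genUnit 0, genUnit_mem 0, rfl⟩, 0, by rw [h0]; decide⟩
    · exact ⟨_, ⟨genUnit 1 * genUnit 3 * genUnit 1,
        mul_mem (mul_mem (genUnit_mem 1) (genUnit_mem 3)) (genUnit_mem 1), rfl⟩, 1,
        by rw [h131]; decide⟩
    · exact ⟨_, ⟨1, one_mem _, rfl⟩, 0, by decide⟩
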